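/- Let G be a simple graph on [r] with no isolated vertex and let α be a vertex of SP(G) = {x ∈ ℝ^r : x_i + x_j ≥ 1 for edges {i,j}, x ≥ 0}. Let S_{1/2} = {i : α_i = 1/2}. Then the induced subgraph of G on S_{1/2} has no bipartite connected component. -/

import Mathlib

/-!
Colour the bipartite component `C` of `S½` by `±1` and extend by `0`; call this `d`. Every
constraint of `SP(G)` that is tight at `α` stays tight along the line `α + t • d`: an edge inside
`C` gains `+t` at one end and `-t` at the other, an edge leaving `C` is not tight (its other end
has `α ≠ 1/2`, hence `α > 1/2`), and no vertex of `C` has `α = 0`. The slack constraints survive a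
small perturbation because there are finitely many of them, so `α` is the midpoint of
`α ± t • d ∈ SP(G)` and cannot be a vertex.
-/

/-- The polyhedron `SP(G) = {x ∈ ℝ^V : x i + x j ≥ 1 for all edges ij, x ≥ 0}`. -/
def SPgraph {V : Type*} (G : SimpleGraph V) : Set (V → ℝ) :=
  {x | (∀ i j, G.Adj i j → 1 ≤ x i + x j) ∧ ∀ i, 0 ≤ x i}

/-- The connected component (in a graph `H`) of a vertex `v` is bipartite:
there is a proper 2-colouring of the vertices reachable from `v`. A one-vertex
component is bipartite in this sense. -/
def componentBipartite {W : Type*} (H : SimpleGraph W) (v : W) : Prop :=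
  ∃ c : W → Bool, ∀ u w, H.Reachable v u → H.Reachable v w → H.Adj u w → c u ≠ c w

open Filter Topology

theorem notMem_extremePoints_of_eventually_add_smul_mem {E : Type*} [AddCommGroup E]
    [Module ℝ E] {s : Set E} {x d : E} (h : ∀ᶠ t in 𝓝 (0 : ℝ), x + t • d ∈ s) (hd : d ≠ 0) :
    x ∉ s.extremePoints ℝ := by
  intro hx
  have h' : ∀ᶠ t in 𝓝 (0 : ℝ), x + (-t) • d ∈ s :=
    (continuous_neg.tendsto' (0 : ℝ) 0 neg_zero).eventually h
  have hpunct := (h.and h').filter_mono (nhdsWithin_le_nhds (s := {0}ᶜ))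
  obtain ⟨t, ⟨hpos, hneg⟩, ht⟩ := (hpunct.and self_mem_nhdsWithin).exists
  have hmid : x ∈ openSegment ℝ (x + t • d) (x + (-t) • d) :=
    ⟨1 / 2, 1 / 2, by norm_num, by norm_num, by norm_num, by module⟩
  have htd : t • d = 0 := by
    simpa using ((mem_extremePoints.1 hx).2 _ hpos _ hneg hmid).1
  exact hd ((smul_eq_zero.1 htd).resolve_left ht)

theorem eventually_le_add_mul {a b c : ℝ} (hca : c ≤ a) (hb : a = c → b = 0) :
    ∀ᶠ t in 𝓝 (0 : ℝ), c ≤ a + t * b := by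
  rcases hca.eq_or_lt with rfl | hlt
  · simp [hb rfl]
  · have hcont : Tendsto (fun t : ℝ => a + t * b) (𝓝 0) (𝓝 a) :=
      (continuous_const.add (continuous_id.mul continuous_const)).tendsto' 0 a (by simp)
    exact (hcont.eventually (lt_mem_nhds hlt)).mono fun _ => le_of_lt

theorem eventually_add_smul_mem_SPgraph {V : Type*} [Finite V] {G : SimpleGraph V}
    {x d : V → ℝ} (hx : x ∈ SPgraph G)
    (hzero : ∀ i, x i = 0 → d i = 0)
    (htight : ∀ i j, G.Adj i j → x i + x j = 1 → d i + d j = 0) :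
    ∀ᶠ t in 𝓝 (0 : ℝ), x + t • d ∈ SPgraph G := by
  simp only [SPgraph, Set.mem_ofPred_eq, Pi.add_apply, Pi.smul_apply, smul_eq_mul,
    eventually_and, eventually_all]
  refine ⟨fun i j hij => ?_, fun i => eventually_le_add_mul (hx.2 i) (hzero i)⟩
  exact (eventually_le_add_mul (hx.1 i j hij) (htight i j hij)).mono fun t ht => by linarith

section componentSign

variable {V : Type*} (G : SimpleGraph V) (S : Set V) (c : S → Bool) (v : S)

open Classical in
noncomputable def componentSign (i : V) : ℝ :=
  if h : i ∈ S then
    if (G.induce S).Reachable v ⟨i, h⟩ then (if c ⟨i, h⟩ then 1 else -1) else 0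
  else 0

variable {G S c v}

theorem componentSign_of_notMem {i : V} (hi : i ∉ S) : componentSign G S c v i = 0 := by
  simp [componentSign, hi]

theorem componentSign_self_ne_zero : componentSign G S c v v ≠ 0 := by
  simp only [componentSign, Subtype.coe_prop, dif_pos, Subtype.coe_eta,
    SimpleGraph.Reachable.refl, if_true]
  cases c v <;> norm_num

theorem componentSign_add_eq_zero
    (hc : ∀ u w, (G.induce S).Reachable v u → (G.induce S).Reachable v w →
      (G.induce S).Adj u w → c u ≠ c w)
    {i j : V} (hij : G.Adj i j) (hS : i ∈ S ↔ j ∈ S) :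
    componentSign G S c v i + componentSign G S c v j = 0 := by
  by_cases hi : i ∈ S
  swap
  · rw [componentSign_of_notMem hi, componentSign_of_notMem (hS.not.1 hi), add_zero]
  have hj := hS.1 hi
  have hadj : (G.induce S).Adj ⟨i, hi⟩ ⟨j, hj⟩ := hij
  have hreach : (G.induce S).Reachable v ⟨i, hi⟩ ↔ (G.induce S).Reachable v ⟨j, hj⟩ :=
    ⟨fun h => h.trans hadj.reachable, fun h => h.trans hadj.symm.reachable⟩
  by_cases hr : (G.induce S).Reachable v ⟨i, hi⟩
  · have hne := hc _ _ hr (hreach.1 hr) hadj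
    simp only [componentSign, dif_pos hi, dif_pos hj, if_pos hr, if_pos (hreach.1 hr)]
    revert hne
    cases c ⟨i, hi⟩ <;> cases c ⟨j, hj⟩ <;> norm_num
  · simp [componentSign, hi, hj, hr, mt hreach.2 hr]

end componentSign

theorem vertex_SP_half_set_no_bipartite_component_general
    {r : ℕ} (G : SimpleGraph (Fin r))
    (α : Fin r → ℝ) (hα : α ∈ Set.extremePoints ℝ (SPgraph G)) :
    ∀ v : {i : Fin r // α i = 1/2},
      ¬ componentBipartite (G.induce {i : Fin r | α i = 1/2})
        ⟨v.1, v.2⟩ := by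
  rintro ⟨v, hv⟩ ⟨c, hc⟩
  set d := componentSign G {i | α i = 1/2} c ⟨v, hv⟩
  have hzero : ∀ i, α i = 0 → d i = 0 := fun i hi =>
    componentSign_of_notMem (by norm_num [hi])
  have htight : ∀ i j, G.Adj i j → α i + α j = 1 → d i + d j = 0 := fun i j hij hsum =>
    componentSign_add_eq_zero hc hij
      (show α i = 1/2 ↔ α j = 1/2 from ⟨fun _ => by linarith, fun _ => by linarith⟩)
  have hd : d ≠ 0 := fun h => componentSign_self_ne_zero (congrFun h v)
  exact notMem_extremePoints_of_eventually_add_smul_mem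
    (eventually_add_smul_mem_SPgraph hα.1 hzero htight) hd hα

/-- if `α` is a vertex of `SP(G)` (for `G` with no isolated vertex)
and `S½ = {i : α i = 1/2}`, then the induced subgraph of `G` on `S½` has no
bipartite connected component. -/
theorem vertex_SP_half_set_no_bipartite_component
    {r : ℕ} (G : SimpleGraph (Fin r))
    (hiso : ∀ i, ∃ j, G.Adj i j)
    (α : Fin r → ℝ) (hα : α ∈ Set.extremePoints ℝ (SPgraph G)) :
    ∀ v : {i : Fin r // α i = 1/2},
      ¬ componentBipartite (G.induce {i : Fin r | α i = 1/2})
        ⟨v.1, v.2⟩ :=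
  vertex_SP_half_set_no_bipartite_component_general G α hα
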